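/- The family of solutions (u_h) of the schemes G^v_{ε,h}(u_h,·) = 0 is uniformly bounded: there is a constant C depending only on d, λ, Λ, ‖f‖_{L^∞(Ω)}, ‖g‖_{L^∞(∂Ω)}, and the diameter of Ω (but not on h, ε ∈ (0,1), or v), such that sup_h max_{x ∈ Ω̄_h} |u_h(x)| ≤ C. -/

import Mathlib

/-!
Let `K = Mf / (2 d l)` and take a grid point where `u + K |y|²` is maximal. On the boundary `u ≤ Mg`
there. At an interior point the monotonicity of the scheme compares `u` with the paraboloid
`-K |y|²`, whose discrete Hessian is `-2K • 1`; ellipticity then gives `Fᵢ (D²ₕ u) ≥ 2Kld = Mf ≥ f`,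
and the equation forces `ε u ≤ 0`. Either way `u ≤ Mg + K R²` on the whole grid. The lower bound is
the same argument for `-u`, which solves the scheme for the operators `M ↦ -Fᵢ (-M)`, again
uniformly elliptic and monotone.
-/

/-- `i`-th coordinate direction in `ℝ^d`. -/
def gridDir {d : ℕ} (i : Fin d) : Fin d → ℝ := Pi.single i 1

/-- Centred finite-difference discretisation of the Hessian on a uniform grid of size `h`. -/
noncomputable def discHess {d : ℕ} (h : ℝ) (u : (Fin d → ℝ) → ℝ) (x : Fin d → ℝ) :
    Matrix (Fin d) (Fin d) ℝ :=
  Matrix.of fun i j =>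
    if i = j then
      (u (x + h • gridDir i) + u (x - h • gridDir i) - 2 * u x) / h ^ 2
    else
      (-2 * u x + u (x + h • gridDir i - h • gridDir j) + u (x - h • gridDir i + h • gridDir j)
          + u (x + h • gridDir i) + u (x - h • gridDir i)
          + u (x + h • gridDir j) + u (x - h • gridDir j)) / (2 * h ^ 2)

/-- (λ,Λ)-uniform ellipticity, with the size of a PSD matrix measured by its trace. -/
def UniformlyElliptic {d : ℕ} (l L : ℝ) (F : Matrix (Fin d) (Fin d) ℝ → ℝ) : Prop :=
  ∀ M N : Matrix (Fin d) (Fin d) ℝ, M.IsSymm → N.PosSemidef →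
    l * N.trace ≤ F M - F (M + N) ∧ F M - F (M + N) ≤ L * N.trace

variable {d : ℕ}

section DiscreteHessian

lemma sum_sq_add_smul_gridDir (x : Fin d → ℝ) (i : Fin d) (c : ℝ) :
    ∑ k, (x + c • gridDir i) k ^ 2 = ∑ k, x k ^ 2 + (2 * c * x i + c ^ 2) := by
  have hk : ∀ k,
      (x + c • gridDir i) k ^ 2 = x k ^ 2 + if k = i then 2 * c * x i + c ^ 2 else 0 := by
    intro k
    rcases eq_or_ne k i with rfl | hki
    · simp [gridDir]; ring
    · simp [gridDir, hki]
  simp only [hk, Finset.sum_add_distrib, Finset.sum_ite_eq', Finset.mem_univ, if_true]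

lemma add_smul_gridDir_apply_of_ne (x : Fin d → ℝ) {i j : Fin d} (hij : i ≠ j) (c : ℝ) :
    (x + c • gridDir i) j = x j := by
  simp [gridDir, hij.symm]

lemma discHess_smul (h c : ℝ) (u : (Fin d → ℝ) → ℝ) (x : Fin d → ℝ) :
    discHess h (c • u) x = c • discHess h u x := by
  ext i j
  simp only [discHess, Matrix.of_apply, Matrix.smul_apply, Pi.smul_apply, smul_eq_mul]
  split_ifs <;> ring

lemma discHess_neg (h : ℝ) (u : (Fin d → ℝ) → ℝ) (x : Fin d → ℝ) :
    discHess h (-u) x = -discHess h u x := by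
  simpa using discHess_smul h (-1) u x

/-- The off-diagonal stencil of `discHess` does not annihilate constants; this shift is the one that
makes the discrete Hessian of the barrier at `x` exactly `2 • 1`. -/
def quadBarrier (h : ℝ) (x : Fin d → ℝ) (y : Fin d → ℝ) : ℝ :=
  ∑ k, y k ^ 2 - (∑ k, x k ^ 2 + 2 * h ^ 2)

lemma discHess_quadBarrier {h : ℝ} (hh : h ≠ 0) (x : Fin d → ℝ) :
    discHess h (quadBarrier h x) x = (2 : ℝ) • (1 : Matrix (Fin d) (Fin d) ℝ) := by
  ext i j
  rcases eq_or_ne i j with rfl | hij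
  all_goals simp only [discHess, quadBarrier, Matrix.of_apply, Matrix.smul_apply, smul_eq_mul,
    sub_eq_add_neg (_ + _), sub_eq_add_neg x, ← neg_smul, sum_sq_add_smul_gridDir]
  · simp only [if_true, Matrix.one_apply_eq]
    field_simp
    ring
  · simp only [if_neg hij, Matrix.one_apply_ne hij, add_smul_gridDir_apply_of_ne _ hij]
    field_simp
    ring

end DiscreteHessian

namespace UniformlyElliptic

variable {l L : ℝ} {F : Matrix (Fin d) (Fin d) ℝ → ℝ}

lemma le_apply_neg_smul_one (hF : UniformlyElliptic l L F) (hF0 : F 0 = 0) {a : ℝ} (ha : 0 ≤ a) :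
    l * (a * d) ≤ F (-a • 1) := by
  have hPSD : (a • (1 : Matrix (Fin d) (Fin d) ℝ)).PosSemidef := by
    rw [Matrix.smul_one_eq_diagonal]
    exact Matrix.PosSemidef.diagonal fun _ => ha
  have := (hF (-a • 1) (a • 1) (Matrix.isSymm_one.smul _) hPSD).1
  simpa [← add_smul, hF0, Matrix.trace_smul] using this

lemma neg_comp_neg (hF : UniformlyElliptic l L F) : UniformlyElliptic l L (fun M => -F (-M)) := by
  intro M N hM hN
  have hMN : (-(M + N)).IsSymm := (hM.add (Matrix.isHermitian_iff_isSymm.mp hN.isHermitian)).neg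
  have := hF (-(M + N)) N hMN hN
  rw [show -(M + N) + N = -M by abel] at this
  exact ⟨by linarith [this.1], by linarith [this.2]⟩

end UniformlyElliptic

section Scheme

variable {l L ε h K Mf Mg R : ℝ} {Ωint Ωbd : Finset (Fin d → ℝ)}
  {F F₁ F₂ : Matrix (Fin d) (Fin d) ℝ → ℝ} {v f g u : (Fin d → ℝ) → ℝ}

def IsGridMonotone (h : ℝ) (Ωint Ωbd : Finset (Fin d → ℝ)) (F : Matrix (Fin d) (Fin d) ℝ → ℝ) :
    Prop :=
  ∀ (p q : (Fin d → ℝ) → ℝ), ∀ x ∈ Ωint,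
    (∀ y : Fin d → ℝ, (y ∈ Ωint ∨ y ∈ Ωbd) → p y - q y ≤ p x - q x) →
    F (discHess h q x) ≤ F (discHess h p x)

/-- `G^v_{ε,h}(u, ·) = 0` on `Ωint`, with Dirichlet data `g` on `Ωbd`. -/
def IsSchemeSolution (ε h : ℝ) (Ωint Ωbd : Finset (Fin d → ℝ))
    (F₁ F₂ : Matrix (Fin d) (Fin d) ℝ → ℝ) (v f g u : (Fin d → ℝ) → ℝ) : Prop :=
  (∀ x ∈ Ωint, ε * u x + v x * F₁ (discHess h u x) + (1 - v x) * F₂ (discHess h u x) - f x = 0) ∧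
    ∀ x ∈ Ωbd, u x = g x

lemma IsGridMonotone.neg_comp_neg (hm : IsGridMonotone h Ωint Ωbd F) :
    IsGridMonotone h Ωint Ωbd (fun M => -F (-M)) := by
  intro p q x hx hpq
  have := hm (-q) (-p) x hx fun y hy => by simp only [Pi.neg_apply]; linarith [hpq y hy]
  simp only [discHess_neg] at this
  linarith

lemma IsSchemeSolution.neg (hu : IsSchemeSolution ε h Ωint Ωbd F₁ F₂ v f g u) :
    IsSchemeSolution ε h Ωint Ωbd (fun M => -F₁ (-M)) (fun M => -F₂ (-M)) v (-f) (-g) (-u) := by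
  refine ⟨fun x hx => ?_, fun x hx => by simp [hu.2 x hx]⟩
  simp only [discHess_neg, neg_neg, Pi.neg_apply]
  linarith [hu.1 x hx]

lemma IsGridMonotone.le_apply_discHess_of_max (hm : IsGridMonotone h Ωint Ωbd F)
    (hF : UniformlyElliptic l L F) (hF0 : F 0 = 0) (hh : h ≠ 0) (hK : 0 ≤ K) {x₀ : Fin d → ℝ}
    (hx₀ : x₀ ∈ Ωint)
    (hmax : ∀ y, (y ∈ Ωint ∨ y ∈ Ωbd) → u y + K * ∑ k, y k ^ 2 ≤ u x₀ + K * ∑ k, x₀ k ^ 2) :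
    l * (2 * K * d) ≤ F (discHess h u x₀) := by
  have htouch := hm u (-K • quadBarrier h x₀) x₀ hx₀ fun y hy => by
    simp only [Pi.smul_apply, quadBarrier, smul_eq_mul]
    linarith [hmax y hy]
  rw [discHess_smul, discHess_quadBarrier hh, smul_smul] at htouch
  calc l * (2 * K * d) ≤ F (-(2 * K) • 1) := hF.le_apply_neg_smul_one hF0 (by positivity)
    _ = F ((-K * 2) • 1) := by ring_nf
    _ ≤ F (discHess h u x₀) := htouch

lemma IsSchemeSolution.nonpos_of_max (hu : IsSchemeSolution ε h Ωint Ωbd F₁ F₂ v f g u)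
    (hε : 0 < ε) (hh : h ≠ 0) (hF₁ : UniformlyElliptic l L F₁) (hF₂ : UniformlyElliptic l L F₂)
    (hF₁0 : F₁ 0 = 0) (hF₂0 : F₂ 0 = 0) (hm₁ : IsGridMonotone h Ωint Ωbd F₁)
    (hm₂ : IsGridMonotone h Ωint Ωbd F₂) (hv : ∀ x, v x ∈ Set.Icc (0 : ℝ) 1) (hK : 0 ≤ K)
    (hf : ∀ x ∈ Ωint, f x ≤ l * (2 * K * d)) {x₀ : Fin d → ℝ} (hx₀ : x₀ ∈ Ωint)
    (hmax : ∀ y, (y ∈ Ωint ∨ y ∈ Ωbd) → u y + K * ∑ k, y k ^ 2 ≤ u x₀ + K * ∑ k, x₀ k ^ 2) :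
    u x₀ ≤ 0 := by
  have h₁ := hm₁.le_apply_discHess_of_max hF₁ hF₁0 hh hK hx₀ hmax
  have h₂ := hm₂.le_apply_discHess_of_max hF₂ hF₂0 hh hK hx₀ hmax
  obtain ⟨hv₀, hv₁⟩ := hv x₀
  have hconv : f x₀ ≤ v x₀ * F₁ (discHess h u x₀) + (1 - v x₀) * F₂ (discHess h u x₀) :=
    calc f x₀ ≤ v x₀ * (l * (2 * K * d)) + (1 - v x₀) * (l * (2 * K * d)) := by
          linarith [hf x₀ hx₀]
      _ ≤ _ := by gcongr
  have hεu : ε * u x₀ ≤ 0 := by linarith [hu.1 x₀ hx₀]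
  exact nonpos_of_mul_nonpos_right hεu hε

lemma IsSchemeSolution.le (hu : IsSchemeSolution ε h Ωint Ωbd F₁ F₂ v f g u)
    (hε : 0 < ε) (hh : h ≠ 0) (hd : 0 < d) (hl : 0 < l) (hMf : 0 ≤ Mf) (hMg : 0 ≤ Mg)
    (hF₁ : UniformlyElliptic l L F₁) (hF₂ : UniformlyElliptic l L F₂)
    (hF₁0 : F₁ 0 = 0) (hF₂0 : F₂ 0 = 0) (hm₁ : IsGridMonotone h Ωint Ωbd F₁)
    (hm₂ : IsGridMonotone h Ωint Ωbd F₂) (hv : ∀ x, v x ∈ Set.Icc (0 : ℝ) 1)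
    (hf : ∀ x ∈ Ωint, f x ≤ Mf) (hg : ∀ x ∈ Ωbd, g x ≤ Mg)
    (hR : ∀ x, (x ∈ Ωint ∨ x ∈ Ωbd) → ∑ i, x i ^ 2 ≤ R ^ 2)
    {x : Fin d → ℝ} (hx : x ∈ Ωint ∨ x ∈ Ωbd) :
    u x ≤ Mg + Mf / (2 * d * l) * R ^ 2 := by
  set K := Mf / (2 * d * l)
  have hK : 0 ≤ K := by positivity
  have hKf : ∀ y ∈ Ωint, f y ≤ l * (2 * K * d) := by
    have : (d : ℝ) ≠ 0 := by positivity
    simpa only [K, show l * (2 * (Mf / (2 * d * l)) * d) = Mf by field_simp] using hf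
  obtain ⟨x₀, hx₀, hmax⟩ := Finset.exists_max_image (Ωint ∪ Ωbd)
    (fun y => u y + K * ∑ k, y k ^ 2) ⟨x, Finset.mem_union.mpr hx⟩
  replace hx₀ := Finset.mem_union.mp hx₀
  replace hmax : ∀ y, (y ∈ Ωint ∨ y ∈ Ωbd) → u y + K * ∑ k, y k ^ 2 ≤ u x₀ + K * ∑ k, x₀ k ^ 2 :=
    fun y hy => hmax y (Finset.mem_union.mpr hy)
  have hux₀ : u x₀ ≤ Mg := by
    rcases hx₀ with hint | hbd
    · exact (hu.nonpos_of_max hε hh hF₁ hF₂ hF₁0 hF₂0 hm₁ hm₂ hv hK hKf hint hmax).trans hMg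
    · exact hu.2 x₀ hbd ▸ hg x₀ hbd
  have hx_nonneg : 0 ≤ K * ∑ k, x k ^ 2 := by positivity
  nlinarith [hmax x hx, hR x₀ hx₀]

end Scheme

theorem stmt_10_general {d : ℕ} (hd : 0 < d) (l L : ℝ) (hl : 0 < l)
    (Mf Mg R : ℝ) (hMf : 0 ≤ Mf) (hMg : 0 ≤ Mg) :
    ∃ C : ℝ, ∀ (ε h : ℝ), ε ∈ Set.Ioo (0 : ℝ) 1 → 0 < h →
      ∀ (Ωint Ωbd : Finset (Fin d → ℝ)),
      (∀ x : Fin d → ℝ, (x ∈ Ωint ∨ x ∈ Ωbd) → ∑ i, (x i) ^ 2 ≤ R ^ 2) →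
      ∀ F₁ F₂ : Matrix (Fin d) (Fin d) ℝ → ℝ,
      UniformlyElliptic l L F₁ → UniformlyElliptic l L F₂ → F₁ 0 = 0 → F₂ 0 = 0 →
      (∀ (p q : (Fin d → ℝ) → ℝ), ∀ x ∈ Ωint,
        (∀ y : Fin d → ℝ, (y ∈ Ωint ∨ y ∈ Ωbd) → p y - q y ≤ p x - q x) →
        F₁ (discHess h q x) ≤ F₁ (discHess h p x) ∧
        F₂ (discHess h q x) ≤ F₂ (discHess h p x)) →
      ∀ hv f g u : (Fin d → ℝ) → ℝ,
      (∀ x, hv x ∈ Set.Icc (0 : ℝ) 1) →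
      (∀ x ∈ Ωint, |f x| ≤ Mf) → (∀ x ∈ Ωbd, |g x| ≤ Mg) →
      (∀ x ∈ Ωint,
        ε * u x + hv x * F₁ (discHess h u x) + (1 - hv x) * F₂ (discHess h u x) - f x = 0) →
      (∀ x ∈ Ωbd, u x = g x) →
      ∀ x : Fin d → ℝ, (x ∈ Ωint ∨ x ∈ Ωbd) → |u x| ≤ C := by
  refine ⟨Mg + Mf / (2 * d * l) * R ^ 2, ?_⟩
  intro ε h hε hh Ωint Ωbd hR F₁ F₂ hF₁ hF₂ hF₁0 hF₂0 hmono v f g u hv hf hg hsch hbc x hx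
  have hu : IsSchemeSolution ε h Ωint Ωbd F₁ F₂ v f g u := ⟨hsch, hbc⟩
  have hm₁ : IsGridMonotone h Ωint Ωbd F₁ := fun p q y hy hpq => (hmono p q y hy hpq).1
  have hm₂ : IsGridMonotone h Ωint Ωbd F₂ := fun p q y hy hpq => (hmono p q y hy hpq).2
  have hupper := hu.le hε.1 hh.ne' hd hl hMf hMg hF₁ hF₂ hF₁0 hF₂0 hm₁ hm₂ hv
    (fun y hy => (abs_le.mp (hf y hy)).2) (fun y hy => (abs_le.mp (hg y hy)).2) hR hx
  have hlower := hu.neg.le hε.1 hh.ne' hd hl hMf hMg hF₁.neg_comp_neg hF₂.neg_comp_neg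
    (by simp [hF₁0]) (by simp [hF₂0]) hm₁.neg_comp_neg hm₂.neg_comp_neg hv
    (fun y hy => neg_le.mp (abs_le.mp (hf y hy)).1) (fun y hy => neg_le.mp (abs_le.mp (hg y hy)).1)
    hR hx
  exact abs_le.mpr ⟨neg_le.mp hlower, hupper⟩

/-- the solutions u_h of the schemes G^v_{ε,h}(u_h,·) = 0 are uniformly
bounded: there is a constant C depending only on d, λ, Λ, ‖f‖_∞, ‖g‖_∞ and the diameter
of Ω — but not on h, ε ∈ (0,1) or v — such that sup_h max_{Ω̄_h} |u_h| ≤ C. -/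
theorem stmt_10 {d : ℕ} (hd : 0 < d) (l L : ℝ) (hl : 0 < l) (hlL : l ≤ L)
    (Mf Mg R : ℝ) (hMf : 0 ≤ Mf) (hMg : 0 ≤ Mg) (hR : 0 ≤ R) :
    ∃ C : ℝ, ∀ (ε h : ℝ), ε ∈ Set.Ioo (0 : ℝ) 1 → 0 < h →
      ∀ (Ωint Ωbd : Finset (Fin d → ℝ)),
      (∀ x : Fin d → ℝ, (x ∈ Ωint ∨ x ∈ Ωbd) → ∑ i, (x i) ^ 2 ≤ R ^ 2) →
      ∀ F₁ F₂ : Matrix (Fin d) (Fin d) ℝ → ℝ,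
      UniformlyElliptic l L F₁ → UniformlyElliptic l L F₂ → F₁ 0 = 0 → F₂ 0 = 0 →
      (∀ (p q : (Fin d → ℝ) → ℝ), ∀ x ∈ Ωint,
        (∀ y : Fin d → ℝ, (y ∈ Ωint ∨ y ∈ Ωbd) → p y - q y ≤ p x - q x) →
        F₁ (discHess h q x) ≤ F₁ (discHess h p x) ∧
        F₂ (discHess h q x) ≤ F₂ (discHess h p x)) →
      ∀ hv f g u : (Fin d → ℝ) → ℝ,
      (∀ x, hv x ∈ Set.Icc (0 : ℝ) 1) →
      (∀ x ∈ Ωint, |f x| ≤ Mf) → (∀ x ∈ Ωbd, |g x| ≤ Mg) →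
      (∀ x ∈ Ωint,
        ε * u x + hv x * F₁ (discHess h u x) + (1 - hv x) * F₂ (discHess h u x) - f x = 0) →
      (∀ x ∈ Ωbd, u x = g x) →
      ∀ x : Fin d → ℝ, (x ∈ Ωint ∨ x ∈ Ωbd) → |u x| ≤ C :=
  stmt_10_general hd l L hl Mf Mg R hMf hMg
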